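/- arXiv:2112.09781 — 2 statements merged into one kernel-verified Lean document; each statement's English description precedes it below -/
import Mathlib

section
/- Let J be a finite-dimensional unital real Jordan algebra with a Jordan frame (c₁,…,c_r). If 1 ≤ i ≤ j ≤ r and 1 ≤ k ≤ l ≤ r with (i,j) ≠ (k,l), then τ(x, y) = 0 for all x ∈ J_{ij} and y ∈ J_{kl}; that is, distinct Peirce spaces are τ-orthogonal. -/
open Finset

section JordanPrelim

variable {J : Type*} [AddCommGroup J] [Module ℝ J]

/-- `c` is an idempotent: `c∘c = c`. -/
def IsIdem (jmul : J →ₗ[ℝ] J →ₗ[ℝ] J) (c : J) : Prop := jmul c c = c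

/-- A nonzero idempotent is primitive if it is not the sum of two nonzero idempotents. -/
def IsPrimitive (jmul : J →ₗ[ℝ] J →ₗ[ℝ] J) (c : J) : Prop :=
  IsIdem jmul c ∧ c ≠ 0 ∧
    ¬ ∃ d e : J, IsIdem jmul d ∧ IsIdem jmul e ∧ d ≠ 0 ∧ e ≠ 0 ∧ c = d + e

/-- `(c 1, …, c r)` is a Jordan frame: pairwise orthogonal primitive idempotents
summing to the unit. -/
def IsJordanFrame (jmul : J →ₗ[ℝ] J →ₗ[ℝ] J) (one : J) {r : ℕ} (c : Fin r → J) : Prop :=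
  (∀ i, IsPrimitive jmul (c i)) ∧
  (∀ i j, i ≠ j → jmul (c i) (c j) = 0) ∧
  (∑ i, c i) = one

/-- The Peirce space `J_{ij} = {x | c_k ∘ x = ½(δ_{ki} + δ_{kj}) x for all k}`. -/
noncomputable def Peirce (jmul : J →ₗ[ℝ] J →ₗ[ℝ] J) {r : ℕ} (c : Fin r → J) (i j : Fin r) :
    Submodule ℝ J :=
  ⨅ k : Fin r, LinearMap.ker
    (jmul (c k) -
      (((if k = i then (1 : ℝ) else 0) + (if k = j then 1 else 0)) / 2) • LinearMap.id)

/-- The trace form `τ(x,y) = tr L_{x∘y}`. -/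
noncomputable def tauF (jmul : J →ₗ[ℝ] J →ₗ[ℝ] J) (x y : J) : ℝ :=
  LinearMap.trace ℝ J (jmul (jmul x y))

end JordanPrelim

/-!
The trace form is associative, `τ(a∘x, y) = τ(x, a∘y)`: the difference is the trace of
`L_{[L_y, L_x] a}`, and the linearized Jordan identity makes `[L_y, L_x]` a derivation, so
`L_{[L_y, L_x] a} = [[L_y, L_x], L_a]` is a commutator. Hence every `L_{c_m}` is `τ`-symmetric, and
eigenvectors of it with distinct eigenvalues are `τ`-orthogonal. Two distinct Peirce spaces
`J_{ij}`, `J_{kl}` (with `i ≤ j`, `k ≤ l`) lie in eigenspaces of some `L_{c_m}` with distinct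
eigenvalues, since the eigenvalue `½(δ_{mi} + δ_{mj})` is nonzero exactly for `m ∈ {i, j}`.
-/

section TraceForm

variable {J : Type*} [AddCommGroup J] [Module ℝ J] (jmul : J →ₗ[ℝ] J →ₗ[ℝ] J)

theorem tauF_smul_left (s : ℝ) (x y : J) : tauF jmul (s • x) y = s * tauF jmul x y := by
  simp [tauF]

theorem tauF_smul_right (s : ℝ) (x y : J) : tauF jmul x (s • y) = s * tauF jmul x y := by
  simp [tauF]

variable (hcomm : ∀ x y : J, jmul x y = jmul y x)
  (hjordan : ∀ x y : J, jmul (jmul x y) (jmul x x) = jmul x (jmul y (jmul x x)))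
include hcomm hjordan

theorem lie_jmul_jmul_sq (x : J) : ⁅jmul x, jmul (jmul x x)⁆ = 0 := by
  ext z
  simpa [Ring.lie_def, sub_eq_zero, hcomm _ (jmul x x), hcomm z] using (hjordan x z).symm

theorem lie_jmul_jmul_cyclic (u v w : J) :
    ⁅jmul u, jmul (jmul v w)⁆ + ⁅jmul v, jmul (jmul w u)⁆ + ⁅jmul w, jmul (jmul u v)⁆ = 0 := by
  have polarization : (2 : ℝ) • (⁅jmul u, jmul (jmul v w)⁆ + ⁅jmul v, jmul (jmul w u)⁆
      + ⁅jmul w, jmul (jmul u v)⁆) =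
      ⁅jmul (u + v + w), jmul (jmul (u + v + w) (u + v + w))⁆
        - ⁅jmul (u + v), jmul (jmul (u + v) (u + v))⁆
        - ⁅jmul (v + w), jmul (jmul (v + w) (v + w))⁆
        - ⁅jmul (w + u), jmul (jmul (w + u) (w + u))⁆
        + ⁅jmul u, jmul (jmul u u)⁆ + ⁅jmul v, jmul (jmul v v)⁆ + ⁅jmul w, jmul (jmul w w)⁆ := by
    simp only [Ring.lie_def, map_add, LinearMap.add_apply, add_mul, mul_add, hcomm v u, hcomm w v,
      hcomm u w, two_smul]
    abel
  simp only [lie_jmul_jmul_sq jmul hcomm hjordan, sub_zero, add_zero, smul_eq_zero] at polarization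
  exact polarization.resolve_left two_ne_zero

theorem lie_lie_jmul (x y a : J) :
    ⁅⁅jmul x, jmul y⁆, jmul a⁆ = jmul (⁅jmul x, jmul y⁆ a) := by
  ext b
  have h₁ := LinearMap.congr_fun (lie_jmul_jmul_cyclic jmul hcomm hjordan x a b) y
  have h₂ := LinearMap.congr_fun (lie_jmul_jmul_cyclic jmul hcomm hjordan y a b) x
  simp only [Ring.lie_def, LinearMap.sub_apply, LinearMap.add_apply, Module.End.mul_apply,
    LinearMap.zero_apply, map_sub] at h₁ h₂ ⊢
  simp only [hcomm (jmul a b) y, hcomm (jmul a b) x, hcomm y x, hcomm b x, hcomm b y, hcomm a y,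
    hcomm a x, hcomm (jmul x b) y, hcomm (jmul y b) x, hcomm (jmul x a) y, hcomm (jmul y a) x,
    hcomm b (jmul y (jmul x a)), hcomm b (jmul x (jmul y a)), hcomm (jmul y b) (jmul x a),
    hcomm (jmul y a) (jmul x b)] at h₁ h₂
  linear_combination (norm := abel) h₁ - h₂

theorem trace_jmul_lie_apply (x y a : J) :
    LinearMap.trace ℝ J (jmul (⁅jmul x, jmul y⁆ a)) = 0 := by
  rw [← lie_lie_jmul jmul hcomm hjordan, Ring.lie_def, map_sub, LinearMap.trace_mul_comm, sub_self]

theorem tauF_jmul_left (a x y : J) : tauF jmul (jmul a x) y = tauF jmul x (jmul a y) := by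
  have hdiff : jmul (jmul a x) y - jmul x (jmul a y) = ⁅jmul y, jmul x⁆ a := by
    simp only [Ring.lie_def, LinearMap.sub_apply, Module.End.mul_apply, hcomm _ y, hcomm a]
  rw [← sub_eq_zero, tauF, tauF, ← map_sub, ← map_sub, hdiff,
    trace_jmul_lie_apply jmul hcomm hjordan]

theorem tauF_eq_zero_of_jmul_eq_smul (a : J) {x y : J} {μ ν : ℝ} (hμν : μ ≠ ν)
    (hx : jmul a x = μ • x) (hy : jmul a y = ν • y) : tauF jmul x y = 0 := by
  have h := tauF_jmul_left jmul hcomm hjordan a x y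
  rw [hx, hy, tauF_smul_left, tauF_smul_right, ← sub_eq_zero, ← sub_mul] at h
  exact (mul_eq_zero.mp h).resolve_left (sub_ne_zero.mpr hμν)

end TraceForm

section PeirceSpaces

noncomputable def peirceEigenvalue {r : ℕ} (i j k : Fin r) : ℝ :=
  ((if k = i then 1 else 0) + (if k = j then 1 else 0)) / 2

theorem mem_Peirce_iff {J : Type*} [AddCommGroup J] [Module ℝ J] (jmul : J →ₗ[ℝ] J →ₗ[ℝ] J)
    {r : ℕ} (c : Fin r → J) (i j : Fin r) (x : J) :
    x ∈ Peirce jmul c i j ↔ ∀ k, jmul (c k) x = peirceEigenvalue i j k • x := by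
  simp [Peirce, Submodule.mem_iInf, sub_eq_zero, peirceEigenvalue]

theorem peirceEigenvalue_ne_zero_iff {r : ℕ} {i j k : Fin r} :
    peirceEigenvalue i j k ≠ 0 ↔ k = i ∨ k = j := by
  unfold peirceEigenvalue
  split_ifs <;> simp_all

theorem exists_peirceEigenvalue_ne {r : ℕ} {i j k l : Fin r} (hij : i ≤ j) (hkl : k ≤ l)
    (hne : (i, j) ≠ (k, l)) : ∃ m, peirceEigenvalue i j m ≠ peirceEigenvalue k l m := by
  by_contra! h
  have supp : ∀ m, (m = i ∨ m = j) ↔ (m = k ∨ m = l) := fun m => by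
    rw [← peirceEigenvalue_ne_zero_iff, ← peirceEigenvalue_ne_zero_iff, h m]
  have := supp i; have := supp j; have := supp k; have := supp l
  apply hne
  grind

end PeirceSpaces

theorem stmt6_general (J : Type*) [AddCommGroup J] [Module ℝ J]
    (jmul : J →ₗ[ℝ] J →ₗ[ℝ] J)
    (hcomm : ∀ x y : J, jmul x y = jmul y x)
    (hjordan : ∀ x y : J, jmul (jmul x y) (jmul x x) = jmul x (jmul y (jmul x x)))
    (r : ℕ) (c : Fin r → J)
    (i j k l : Fin r) (hij : i ≤ j) (hkl : k ≤ l) (hne : (i, j) ≠ (k, l)) :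
    ∀ x ∈ Peirce jmul c i j, ∀ y ∈ Peirce jmul c k l, tauF jmul x y = 0 := by
  intro x hx y hy
  obtain ⟨m, hm⟩ := exists_peirceEigenvalue_ne hij hkl hne
  exact tauF_eq_zero_of_jmul_eq_smul jmul hcomm hjordan (c m) hm
    ((mem_Peirce_iff jmul c i j x).mp hx m) ((mem_Peirce_iff jmul c k l y).mp hy m)

/-- distinct Peirce spaces of a Jordan frame are orthogonal with respect
to the trace form `τ`. -/
theorem stmt6 (J : Type*) [AddCommGroup J] [Module ℝ J] [FiniteDimensional ℝ J]
    (jmul : J →ₗ[ℝ] J →ₗ[ℝ] J)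
    (hcomm : ∀ x y : J, jmul x y = jmul y x)
    (hjordan : ∀ x y : J, jmul (jmul x y) (jmul x x) = jmul x (jmul y (jmul x x)))
    (one : J) (hone : ∀ x : J, jmul one x = x)
    (r : ℕ) (c : Fin r → J) (hframe : IsJordanFrame jmul one c)
    (i j k l : Fin r) (hij : i ≤ j) (hkl : k ≤ l) (hne : (i, j) ≠ (k, l)) :
    ∀ x ∈ Peirce jmul c i j, ∀ y ∈ Peirce jmul c k l, tauF jmul x y = 0 :=
  stmt6_general J jmul hcomm hjordan r c i j k l hij hkl hne
end

section
/- Let J be a finite-dimensional, unital, positive real Jordan algebra, (c₁,…,c_r) a Jordan frame, λ₁,…,λ_r ∈ ℝ, and x = Σ_{i=1}^r λ_i c_i. Then g(J)·x = Σ_{1≤i≤j≤r, (λ_i,λ_j)≠(0,0)} J_{ij}, i.e., the orbit of x under the structure Lie algebra equals the sum of the Peirce spaces indexed by pairs at least one of whose coefficients is nonzero. -/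
open Finset

attribute [local instance 100] LieRing.ofAssociativeRing

/-!
The structure algebra `g(J)` lies in `L_J + 𝔡`, where `𝔡` is the Lie algebra of derivations that
are skew for the trace form `τ`: inner derivations `[L_a, L_b]` are such, and `[D, L_u] = L_{D u}`
for every derivation `D`. Let `C` be the sum of the Peirce spaces `J_{ij}` with `λ_i = λ_j = 0` and
`W` the sum of the others. For `w ∈ C` we have `x∘w = 0` and `τ(c_m, D w) = 0` whenever
`c_m∘w = 0`, so `τ(w, (L_u + D) x) = 0`, i.e. `g(J)·x ⊆ C^⊥`. The commuting operators `L_{c_k}`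
are simultaneously diagonalisable with eigenvalues in `{0, ½, 1}` summing to `1`, which gives the
Peirce decomposition `J = W + C`; as `W ⊥ C` and `τ` is positive definite, `C^⊥ = W`. Conversely
`b ∈ J_{ij}` is a multiple of `L_b x = ((λ_i + λ_j)/2) b`, or, when `λ_i + λ_j = 0 ≠ λ_i`, of
`[L_{c_i}, L_b] x = -(λ_i/2) b`.
-/

section LinearAlgebra

variable {K V : Type*} [Field K] [AddCommGroup V] [Module K V]

theorem Module.End.iSup_iInf_eigenspace_eq_top_of_commute [FiniteDimensional K V] {ι : Type*}
    [Fintype ι] (f : ι → Module.End K V) (hcomm : ∀ i j, Commute (f i) (f j))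
    (h : ∀ i, ⨆ μ, (f i).eigenspace μ = ⊤) :
    ⨆ χ : ι → K, ⨅ i, (f i).eigenspace (χ i) = ⊤ := by
  classical
  suffices hs : ∀ s : Finset ι, ⨆ χ : ι → K, ⨅ i ∈ s, (f i).eigenspace (χ i) = ⊤ by
    simpa using hs Finset.univ
  intro s
  induction s using Finset.induction_on with
  | empty => simp
  | insert a s ha ih =>
    refine eq_top_iff.2 (ih ▸ iSup_le fun χ => ?_)
    have hinv : ∀ x ∈ ⨅ i ∈ s, (f i).eigenspace (χ i), f a x ∈ ⨅ i ∈ s, (f i).eigenspace (χ i) := by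
      simp only [Submodule.mem_iInf, Module.End.mem_eigenspace_iff]
      intro x hx i hi
      rw [← Module.End.mul_apply, (hcomm i a).eq, Module.End.mul_apply, hx i hi, map_smul]
    rw [Submodule.eq_iSup_inf_genEigenspace 1 hinv (h a)]
    refine iSup_le fun μ => le_iSup_of_le (Function.update χ a μ) ?_
    intro x hx
    obtain ⟨hx, hxa⟩ := Submodule.mem_inf.1 hx
    simp only [Submodule.mem_iInf, Finset.mem_insert] at hx ⊢
    rintro i (rfl | hi)
    · simpa using hxa
    · rw [Function.update_of_ne (ne_of_mem_of_not_mem hi ha)]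
      exact hx i hi

theorem LinearMap.BilinForm.orthogonal_le_of_sup_eq_top (B : LinearMap.BilinForm K V)
    (hB : ∀ v, B v v = 0 → v = 0) {W C : Submodule K V} (hWC : W ⊔ C = ⊤)
    (hW : W ≤ B.orthogonal C) : B.orthogonal C ≤ W := by
  intro z hz
  obtain ⟨u, hu, v, hv, rfl⟩ := Submodule.mem_sup.1 (hWC ▸ Submodule.mem_top : z ∈ W ⊔ C)
  have hv0 : v = 0 := hB v (by simpa [hW hu v hv] using hz v hv)
  rwa [hv0, add_zero]

theorem apply_eq_neg_of_mem_skewAdjointLieSubalgebra {B : LinearMap.BilinForm K V}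
    {D : Module.End K V} (hD : D ∈ skewAdjointLieSubalgebra B) (x y : V) :
    B x (D y) = -B (D x) y := by
  rw [(LinearMap.mem_skewAdjointSubmodule D).1 hD x y, Pi.neg_apply, map_neg, neg_neg]

def LieSubalgebra.orbit (𝔤 : LieSubalgebra K (Module.End K V)) (x : V) : Submodule K V :=
  𝔤.toSubmodule.map (LinearMap.applyₗ x)

theorem LieSubalgebra.coe_orbit (𝔤 : LieSubalgebra K (Module.End K V)) (x : V) :
    (𝔤.orbit x : Set V) = {y | ∃ T ∈ 𝔤, y = T x} := by
  ext y
  simp [LieSubalgebra.orbit, eq_comm]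

end LinearAlgebra

theorem exists_eq_ite_add_ite_of_sum_eq_two {ι : Type*} [Fintype ι] [DecidableEq ι]
    (n : ι → ℕ) (hn : ∑ k, n k = 2) :
    ∃ i j, ∀ k, n k = (if k = i then 1 else 0) + (if k = j then 1 else 0) := by
  set m : Multiset ι := ∑ k, n k • {k}
  have hcount : ∀ k, m.count k = n k := by
    intro k
    simp [m, Multiset.count_sum', Multiset.count_singleton]
  have hcard : m.card = 2 := by
    simp [m, hn]
  obtain ⟨i, j, hij⟩ := Multiset.card_eq_two.1 hcard
  refine ⟨i, j, fun k => ?_⟩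
  rw [← hcount, hij]
  simp [Multiset.count_cons, Multiset.count_singleton, add_comm]

theorem exists_eq_half_ite_add_ite {K ι : Type*} [Field K] [CharZero K] [Fintype ι]
    [DecidableEq ι] (χ : ι → K) (hχ : ∀ k, χ k = 0 ∨ χ k = 1 / 2 ∨ χ k = 1)
    (hsum : ∑ k, χ k = 1) :
    ∃ i j, ∀ k, χ k = ((if k = i then 1 else 0) + (if k = j then 1 else 0)) / 2 := by
  have hnat : ∀ k, ∃ n : ℕ, χ k = n / 2 := by
    intro k
    rcases hχ k with h | h | h
    · exact ⟨0, by simp [h]⟩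
    · exact ⟨1, by simp [h]⟩
    · exact ⟨2, by simp [h]⟩
  choose n hn using hnat
  have hn2 : ∑ k, n k = 2 := by
    rw [Finset.sum_congr rfl fun k _ => hn k, ← Finset.sum_div,
      div_eq_one_iff_eq two_ne_zero] at hsum
    exact_mod_cast hsum
  obtain ⟨i, j, hij⟩ := exists_eq_ite_add_ite_of_sum_eq_two n hn2
  refine ⟨i, j, fun k => ?_⟩
  rw [hn k, hij k]
  push_cast [Nat.cast_ite]
  rfl

section JordanProduct

variable {K J : Type*} [Field K] [AddCommGroup J] [Module K J]

structure IsJordanProduct (jmul : J →ₗ[K] J →ₗ[K] J) : Prop where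
  comm : ∀ x y, jmul x y = jmul y x
  jordan : ∀ x y, jmul (jmul x y) (jmul x x) = jmul x (jmul y (jmul x x))

def derivationLieSubalgebra (jmul : J →ₗ[K] J →ₗ[K] J) : LieSubalgebra K (Module.End K J) where
  carrier := {D | ∀ u v, D (jmul u v) = jmul (D u) v + jmul u (D v)}
  zero_mem' := by simp
  add_mem' := by
    intro D E hD hE u v
    simp only [LinearMap.add_apply, hD u v, hE u v, map_add]
    abel
  smul_mem' := by
    intro a D hD u v
    simp only [LinearMap.smul_apply, hD u v, map_smul, smul_add]
  lie_mem' := by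
    intro D E hD hE u v
    simp only [Set.mem_ofPred_eq] at hD hE
    simp only [Ring.lie_def, LinearMap.sub_apply, Module.End.mul_apply, hD, hE, map_add, map_sub]
    abel

variable {jmul : J →ₗ[K] J →ₗ[K] J}

theorem lie_jmul_of_mem_derivationLieSubalgebra {D : Module.End K J}
    (hD : D ∈ derivationLieSubalgebra jmul) (u : J) : ⁅D, jmul u⁆ = jmul (D u) := by
  ext v
  simp [Ring.lie_def, hD u v]

def jmulAddLieSubalgebra (jmul : J →ₗ[K] J →ₗ[K] J) (𝔡 : LieSubalgebra K (Module.End K J))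
    (h𝔡 : 𝔡 ≤ derivationLieSubalgebra jmul)
    (hL : ∀ u v, ⁅(jmul u : Module.End K J), jmul v⁆ ∈ 𝔡) :
    LieSubalgebra K (Module.End K J) where
  carrier := {T | ∃ u, T - jmul u ∈ 𝔡}
  zero_mem' := ⟨0, by simp⟩
  add_mem' := by
    rintro T S ⟨u, hu⟩ ⟨v, hv⟩
    exact ⟨u + v, by simpa only [map_add, add_sub_add_comm] using 𝔡.add_mem hu hv⟩
  smul_mem' := by
    rintro a T ⟨u, hu⟩
    exact ⟨a • u, by simpa only [map_smul, smul_sub] using 𝔡.smul_mem a hu⟩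
  lie_mem' := by
    rintro T S ⟨u, hu⟩ ⟨v, hv⟩
    refine ⟨(T - jmul u) v - (S - jmul v) u, ?_⟩
    -- with `D = T - L_u`, `E = S - L_v`: `⁅D, L_v⁆ = L_{D v}`, so `⁅L_u, L_v⁆ + ⁅D, E⁆` is left
    have key : ⁅T, S⁆ - jmul ((T - jmul u) v - (S - jmul v) u) =
        ⁅(jmul u : Module.End K J), jmul v⁆ + ⁅T - jmul u, S - jmul v⁆ := by
      rw [map_sub, ← lie_jmul_of_mem_derivationLieSubalgebra (h𝔡 hu),
        ← lie_jmul_of_mem_derivationLieSubalgebra (h𝔡 hv)]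
      simp only [sub_lie, lie_sub, ← lie_skew (S - jmul v)]
      abel
    rw [key]
    exact 𝔡.add_mem (hL u v) (𝔡.lie_mem hu hv)

theorem lieSpan_jmul_le_jmulAddLieSubalgebra (𝔡 : LieSubalgebra K (Module.End K J))
    (h𝔡 : 𝔡 ≤ derivationLieSubalgebra jmul)
    (hL : ∀ u v, ⁅(jmul u : Module.End K J), jmul v⁆ ∈ 𝔡) :
    LieSubalgebra.lieSpan K (Module.End K J) {S | ∃ u : J, S = jmul u} ≤
      jmulAddLieSubalgebra jmul 𝔡 h𝔡 hL :=
  LieSubalgebra.lieSpan_le.2 fun _ ⟨u, hu⟩ => ⟨u, by simp [hu]⟩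

namespace IsJordanProduct

theorem commute_jmul_jmul_self (hJ : IsJordanProduct jmul) (x : J) :
    Commute (jmul x) (jmul (jmul x x)) :=
  LinearMap.ext fun y => by
    rw [Module.End.mul_apply, Module.End.mul_apply, hJ.comm (jmul x x) y,
      hJ.comm (jmul x x) (jmul x y), hJ.jordan]

variable [CharZero K]

theorem linearized (hJ : IsJordanProduct jmul) (a b c d : J) :
    jmul a (jmul b (jmul c d)) + jmul c (jmul b (jmul a d)) + jmul d (jmul b (jmul a c)) =
      jmul (jmul a b) (jmul c d) + jmul (jmul c b) (jmul a d) + jmul (jmul d b) (jmul a c) := by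
  have h1 := hJ.jordan (a + c + d) b
  have h2 := hJ.jordan (a + c) b
  have h3 := hJ.jordan (a + d) b
  have h4 := hJ.jordan (c + d) b
  have h5 := hJ.jordan a b
  have h6 := hJ.jordan c b
  have h7 := hJ.jordan d b
  -- inclusion-exclusion isolates the part of the identity for `a + c + d` linear in each of them
  simp only [map_add, LinearMap.add_apply, hJ.comm] at h1 h2 h3 h4 h5 h6 h7 ⊢
  linear_combination (norm := module) (-2⁻¹ : K) • h1 + (2⁻¹ : K) • h2 + (2⁻¹ : K) • h3 +
    (2⁻¹ : K) • h4 - (2⁻¹ : K) • h5 - (2⁻¹ : K) • h6 - (2⁻¹ : K) • h7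

theorem lie_mem_derivationLieSubalgebra (hJ : IsJordanProduct jmul) (a b : J) :
    ⁅(jmul a : Module.End K J), jmul b⁆ ∈ derivationLieSubalgebra jmul := by
  intro u y
  have h1 := hJ.linearized a b u y
  have h2 := hJ.linearized b a u y
  simp only [Ring.lie_def, LinearMap.sub_apply, Module.End.mul_apply, map_sub]
  simp only [hJ.comm] at h1 h2 ⊢
  linear_combination (norm := module) h1 - h2

theorem cube_of_idempotent (hJ : IsJordanProduct jmul) {e : J} (he : jmul e e = e)
    (y : J) : (2 : K) • jmul e (jmul e (jmul e y)) = (3 : K) • jmul e (jmul e y) - jmul e y := by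
  have h := hJ.linearized e e e y
  simp only [he, hJ.comm] at h ⊢
  linear_combination (norm := module) h

theorem commute_of_orthogonal (hJ : IsJordanProduct jmul) {e f : J}
    (he : jmul e e = e) (hf : jmul f f = f) (hef : jmul e f = 0) :
    Commute (jmul e) (jmul f) := by
  -- `L_x` commutes with `L_{x∘x}` for `x = e + 2f`, and `x∘x = e + 4f`.
  have hsq : jmul (e + (2 : K) • f) (e + (2 : K) • f) = e + (4 : K) • f := by
    simp only [map_add, map_smul, LinearMap.add_apply, LinearMap.smul_apply, he, hf, hef,
      hJ.comm f e]
    module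
  have h := hJ.commute_jmul_jmul_self (e + (2 : K) • f)
  rw [hsq, Commute, SemiconjBy] at h
  simp only [map_add, map_smul, mul_add, add_mul, mul_smul_comm, smul_mul_assoc] at h
  have h2 : (2 : K) • (jmul e * jmul f) = (2 : K) • (jmul f * jmul e) := by
    linear_combination (norm := module) h
  exact smul_right_injective _ two_ne_zero h2

theorem iSup_eigenspace_eq_top_of_idempotent (hJ : IsJordanProduct jmul) {e : J}
    (he : jmul e e = e) : ⨆ μ, Module.End.eigenspace (jmul e) μ = ⊤ := by
  refine eq_top_iff.2 fun z _ => ?_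
  have hcube := hJ.cube_of_idempotent he z
  have hmem : ∀ (μ : K) (y : J), jmul e y = μ • y → y ∈ ⨆ μ, Module.End.eigenspace (jmul e) μ :=
    fun μ y hy => Submodule.mem_iSup_of_mem μ (Module.End.mem_eigenspace_iff.2 hy)
  -- the components of `z` in the eigenspaces for `0`, `1/2`, `1`, read off `2E³ = 3E² - E`
  have hz : z = (z - (3 : K) • jmul e z + (2 : K) • jmul e (jmul e z)) +
      ((4 : K) • jmul e z - (4 : K) • jmul e (jmul e z)) +
      ((2 : K) • jmul e (jmul e z) - jmul e z) := by module
  rw [hz]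
  refine Submodule.add_mem _ (Submodule.add_mem _ (hmem 0 _ ?_) (hmem (1 / 2) _ ?_)) (hmem 1 _ ?_)
    <;> simp only [map_add, map_sub, map_smul]
  · linear_combination (norm := module) hcube
  · linear_combination (norm := module) (-2 : K) • hcube
  · linear_combination (norm := module) hcube

theorem eigenvalue_of_idempotent (hJ : IsJordanProduct jmul) {e z : J} (he : jmul e e = e)
    (hz : z ≠ 0) {μ : K} (hμ : jmul e z = μ • z) : μ = 0 ∨ μ = 1 / 2 ∨ μ = 1 := by
  have h := hJ.cube_of_idempotent he z
  simp only [hμ, map_smul, smul_smul] at h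
  have hpoly : (μ * (2 * μ - 1) * (μ - 1)) • z = 0 := by
    linear_combination (norm := module) h
  rcases mul_eq_zero.1 ((smul_eq_zero.1 hpoly).resolve_right hz) with h | h
  · rcases mul_eq_zero.1 h with h | h
    · exact Or.inl h
    · exact Or.inr (Or.inl (by linear_combination h / 2))
  · exact Or.inr (Or.inr (by linear_combination h))

end IsJordanProduct

noncomputable def traceForm (jmul : J →ₗ[K] J →ₗ[K] J) : LinearMap.BilinForm K J :=
  jmul.compr₂ (LinearMap.trace K J ∘ₗ jmul)

theorem traceForm_apply (x y : J) :
    traceForm jmul x y = LinearMap.trace K J (jmul (jmul x y)) :=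
  rfl

theorem IsJordanProduct.traceForm_comm (hJ : IsJordanProduct jmul) (x y : J) :
    traceForm jmul x y = traceForm jmul y x := by
  rw [traceForm_apply, traceForm_apply, hJ.comm]

theorem trace_jmul_eq_zero_of_mem_derivationLieSubalgebra [FiniteDimensional K J]
    {D : Module.End K J} (hD : D ∈ derivationLieSubalgebra jmul) (u : J) :
    LinearMap.trace K J (jmul (D u)) = 0 := by
  rw [← lie_jmul_of_mem_derivationLieSubalgebra hD, Ring.lie_def, map_sub,
    LinearMap.trace_mul_comm, sub_self]

variable [CharZero K] [FiniteDimensional K J]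

theorem IsJordanProduct.traceForm_jmul_left (hJ : IsJordanProduct jmul) (u v w : J) :
    traceForm jmul (jmul u v) w = traceForm jmul v (jmul u w) := by
  have h₁ := trace_jmul_eq_zero_of_mem_derivationLieSubalgebra
    (hJ.lie_mem_derivationLieSubalgebra w u) v
  have h₂ := trace_jmul_eq_zero_of_mem_derivationLieSubalgebra
    (hJ.lie_mem_derivationLieSubalgebra v u) w
  simp only [Ring.lie_def, LinearMap.sub_apply, Module.End.mul_apply, map_sub,
    sub_eq_zero] at h₁ h₂
  rw [traceForm_apply, traceForm_apply, hJ.comm (jmul u v) w, h₁, h₂, hJ.comm w v]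

theorem IsJordanProduct.lie_mem_skewAdjointLieSubalgebra (hJ : IsJordanProduct jmul) (a b : J) :
    ⁅(jmul a : Module.End K J), jmul b⁆ ∈ skewAdjointLieSubalgebra (traceForm jmul) := by
  change _ ∈ (traceForm jmul).skewAdjointSubmodule
  rw [LinearMap.mem_skewAdjointSubmodule]
  intro x y
  simp only [Pi.neg_apply, Ring.lie_def, LinearMap.sub_apply, Module.End.mul_apply, map_sub,
    map_neg, hJ.traceForm_jmul_left]
  abel

theorem IsJordanProduct.traceForm_eq_zero_of_eigenvalue_ne (hJ : IsJordanProduct jmul)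
    {e u w : J} {α β : K} (hu : jmul e u = α • u) (hw : jmul e w = β • w) (hαβ : α ≠ β) :
    traceForm jmul u w = 0 := by
  have h := hJ.traceForm_jmul_left e u w
  rw [hu, hw, map_smul, map_smul, LinearMap.smul_apply, smul_eq_mul, smul_eq_mul] at h
  have h' : (α - β) * traceForm jmul u w = 0 := by linear_combination h
  exact (mul_eq_zero.1 h').resolve_left (sub_ne_zero.2 hαβ)

noncomputable abbrev skewDerivationLieSubalgebra (jmul : J →ₗ[K] J →ₗ[K] J) :
    LieSubalgebra K (Module.End K J) :=
  derivationLieSubalgebra jmul ⊓ skewAdjointLieSubalgebra (traceForm jmul)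

theorem IsJordanProduct.traceForm_apply_eq_zero_of_jmul_eq_zero (hJ : IsJordanProduct jmul)
    {D : Module.End K J} (hD : D ∈ skewDerivationLieSubalgebra jmul) {e w : J}
    (he : jmul e e = e) (hw : jmul e w = 0) : traceForm jmul e (D w) = 0 := by
  obtain ⟨hder, hskew⟩ := hD
  have hDe : (2 : K) * traceForm jmul w (jmul e (D e)) = traceForm jmul w (D e) := by
    have h := hder e e
    rw [he, hJ.comm (D e), ← two_smul K] at h
    rw [← smul_eq_mul, ← map_smul, ← h]
  have hDw : jmul e (D w) = -jmul (D e) w := by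
    have h := hder e w
    rw [hw, map_zero] at h
    exact eq_neg_of_add_eq_zero_right h.symm
  have h₁ : traceForm jmul e (D w) = traceForm jmul e (jmul e (D w)) := by
    conv_lhs => rw [← he]
    exact hJ.traceForm_jmul_left e e (D w)
  have h₂ : traceForm jmul e (jmul e (D w)) = -traceForm jmul w (jmul e (D e)) := by
    rw [hDw, map_neg, hJ.traceForm_comm e, hJ.traceForm_jmul_left, hJ.comm (D e)]
  have h₃ : traceForm jmul w (D e) = -traceForm jmul e (D w) := by
    rw [apply_eq_neg_of_mem_skewAdjointLieSubalgebra hskew, hJ.traceForm_comm]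
  -- `τ(e, D w) = -τ(w, e∘D e) = -½ τ(w, D e) = ½ τ(e, D w)`
  linear_combination (2 : K) * h₁ + (2 : K) * h₂ - hDe - h₃

noncomputable def IsJordanProduct.skewStructureLieSubalgebra (hJ : IsJordanProduct jmul) :
    LieSubalgebra K (Module.End K J) :=
  jmulAddLieSubalgebra jmul (skewDerivationLieSubalgebra jmul) inf_le_left fun u v =>
    ⟨hJ.lie_mem_derivationLieSubalgebra u v, hJ.lie_mem_skewAdjointLieSubalgebra u v⟩

theorem IsJordanProduct.apply_sum_mem_orthogonal (hJ : IsJordanProduct jmul) {ι : Type*}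
    [Fintype ι] {c : ι → J} (hc : ∀ i, jmul (c i) (c i) = c i) (lam : ι → K)
    {C : Submodule K J} (hC : ∀ i, lam i ≠ 0 → ∀ w ∈ C, jmul (c i) w = 0) {T : Module.End K J}
    (hT : T ∈ hJ.skewStructureLieSubalgebra) :
    T (∑ i, lam i • c i) ∈ (traceForm jmul).orthogonal C := by
  obtain ⟨u, hD⟩ := hT
  set D := T - jmul u
  set x := ∑ i, lam i • c i
  intro w hw
  have hterm : ∀ i, lam i • jmul (c i) w = 0 ∧ lam i • traceForm jmul (c i) (D w) = 0 := by
    intro i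
    by_cases hi : lam i = 0
    · simp [hi]
    · have h0 := hC i hi w hw
      simp [h0, hJ.traceForm_apply_eq_zero_of_jmul_eq_zero hD (hc i) h0]
  have hxw : jmul x w = 0 := by
    simp only [x, map_sum, map_smul, LinearMap.sum_apply, LinearMap.smul_apply]
    exact Finset.sum_eq_zero fun i _ => (hterm i).1
  have hxD : traceForm jmul x (D w) = 0 := by
    simp only [x, map_sum, map_smul, LinearMap.sum_apply, LinearMap.smul_apply]
    exact Finset.sum_eq_zero fun i _ => (hterm i).2
  have hTx : T x = jmul x u + D x := by simp [D, hJ.comm x u]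
  rw [hTx, map_add, ← hJ.traceForm_jmul_left, hxw, map_zero, LinearMap.zero_apply, zero_add,
    apply_eq_neg_of_mem_skewAdjointLieSubalgebra hD.2, hJ.traceForm_comm, hxD, neg_zero]

end JordanProduct

section Peirce

variable {J : Type*} [AddCommGroup J] [Module ℝ J]

noncomputable def peirceSum (jmul : J →ₗ[ℝ] J →ₗ[ℝ] J) {r : ℕ} (c : Fin r → J)
    (p : Fin r → Fin r → Prop) : Submodule ℝ J :=
  ⨆ (i) (j) (_ : i ≤ j) (_ : p i j), Peirce jmul c i j

variable {jmul : J →ₗ[ℝ] J →ₗ[ℝ] J} {r : ℕ} {c : Fin r → J}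

theorem mem_peirce {i j : Fin r} {y : J} :
    y ∈ Peirce jmul c i j ↔
      ∀ k, jmul (c k) y = (((if k = i then (1 : ℝ) else 0) + (if k = j then 1 else 0)) / 2) • y := by
  simp only [Peirce, Submodule.mem_iInf, LinearMap.mem_ker, LinearMap.sub_apply,
    LinearMap.smul_apply, LinearMap.id_apply, sub_eq_zero]

theorem peirce_comm (i j : Fin r) : Peirce jmul c i j = Peirce jmul c j i := by
  simp only [Peirce, add_comm]

theorem jmul_eq_zero_of_mem_peirce {i j k : Fin r} {y : J} (hy : y ∈ Peirce jmul c i j)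
    (hki : k ≠ i) (hkj : k ≠ j) : jmul (c k) y = 0 := by
  simp [mem_peirce.1 hy k, hki, hkj]

theorem jmul_sum_smul_of_mem_peirce (lam : Fin r → ℝ) {i j : Fin r} {y : J}
    (hy : y ∈ Peirce jmul c i j) :
    jmul (∑ k, lam k • c k) y = ((lam i + lam j) / 2) • y := by
  simp only [map_sum, map_smul, LinearMap.sum_apply, LinearMap.smul_apply, mem_peirce.1 hy,
    smul_smul, ← Finset.sum_smul]
  congr 1
  simp only [mul_div_assoc', mul_add, mul_ite, mul_one, mul_zero, ← Finset.sum_div,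
    Finset.sum_add_distrib, Finset.sum_ite_eq', Finset.mem_univ, if_true]

theorem IsJordanProduct.iSup_peirce_eq_top [FiniteDimensional ℝ J] (hJ : IsJordanProduct jmul)
    {one : J} (hone : ∀ x, jmul one x = x) (hidem : ∀ i, jmul (c i) (c i) = c i)
    (horth : ∀ i j, i ≠ j → jmul (c i) (c j) = 0) (hsum : ∑ i, c i = one) :
    ⨆ i, ⨆ j, Peirce jmul c i j = ⊤ := by
  have hcomm : ∀ k l, Commute (jmul (c k)) (jmul (c l)) := by
    intro k l
    by_cases hkl : k = l
    · rw [hkl]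
    · exact hJ.commute_of_orthogonal (hidem k) (hidem l) (horth k l hkl)
  rw [eq_top_iff, ← Module.End.iSup_iInf_eigenspace_eq_top_of_commute _ hcomm
    fun k => hJ.iSup_eigenspace_eq_top_of_idempotent (hidem k)]
  refine iSup_le fun χ z hz => ?_
  by_cases hz0 : z = 0
  · exact hz0 ▸ Submodule.zero_mem _
  have hk : ∀ k, jmul (c k) z = χ k • z := fun k =>
    Module.End.mem_eigenspace_iff.1 (Submodule.mem_iInf _ |>.1 hz k)
  have hχ : ∑ k, χ k = 1 := by
    have h : (∑ k, χ k) • z = (1 : ℝ) • z :=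
      calc (∑ k, χ k) • z = ∑ k, jmul (c k) z := by
            rw [Finset.sum_smul]
            exact Finset.sum_congr rfl fun k _ => (hk k).symm
        _ = (1 : ℝ) • z := by rw [← LinearMap.sum_apply, ← map_sum, hsum, hone, one_smul]
    exact smul_left_injective ℝ hz0 h
  obtain ⟨i, j, hij⟩ := exists_eq_half_ite_add_ite χ
    (fun k => hJ.eigenvalue_of_idempotent (hidem k) hz0 (hk k)) hχ
  exact Submodule.mem_iSup_of_mem i <| Submodule.mem_iSup_of_mem j <|
    mem_peirce.2 fun k => hij k ▸ hk k

theorem peirce_le_peirceSum {p : Fin r → Fin r → Prop} (hp : ∀ i j, p i j → p j i) {i j : Fin r}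
    (hij : p i j) : Peirce jmul c i j ≤ peirceSum jmul c p := by
  rcases le_total i j with h | h
  · exact le_iSup_of_le i <| le_iSup_of_le j <| le_iSup_of_le h <| le_iSup_of_le hij le_rfl
  · rw [peirce_comm]
    exact le_iSup_of_le j <| le_iSup_of_le i <| le_iSup_of_le h <| le_iSup_of_le (hp i j hij) le_rfl

theorem peirceSum_not_sup_peirceSum (htop : ⨆ i, ⨆ j, Peirce jmul c i j = ⊤)
    {p : Fin r → Fin r → Prop} (hp : ∀ i j, p i j → p j i) :
    peirceSum jmul c (fun i j => ¬p i j) ⊔ peirceSum jmul c p = ⊤ := by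
  refine eq_top_iff.2 (htop ▸ iSup₂_le fun i j => ?_)
  by_cases hij : p i j
  · exact le_sup_of_le_right (peirce_le_peirceSum hp hij)
  · exact le_sup_of_le_left (peirce_le_peirceSum (fun i j h h' => h (hp j i h')) hij)

theorem jmul_eq_zero_of_mem_peirceSum {lam : Fin r → ℝ} {m : Fin r} (hm : lam m ≠ 0) {w : J}
    (hw : w ∈ peirceSum jmul c fun i j => lam i = 0 ∧ lam j = 0) : jmul (c m) w = 0 := by
  suffices h : peirceSum jmul c (fun i j => lam i = 0 ∧ lam j = 0) ≤ LinearMap.ker (jmul (c m)) from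
    h hw
  refine iSup₂_le fun i j => iSup₂_le fun _ hij w hw => ?_
  exact jmul_eq_zero_of_mem_peirce hw (fun h => hm (h ▸ hij.1)) (fun h => hm (h ▸ hij.2))

theorem IsJordanProduct.peirceSum_le_orthogonal [FiniteDimensional ℝ J]
    (hJ : IsJordanProduct jmul) (lam : Fin r → ℝ) :
    peirceSum jmul c (fun i j => ¬(lam i = 0 ∧ lam j = 0)) ≤
      (traceForm jmul).orthogonal (peirceSum jmul c fun i j => lam i = 0 ∧ lam j = 0) := by
  refine iSup₂_le fun i j => iSup₂_le fun _ hij u hu w hw => ?_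
  obtain ⟨m, hm, hmij⟩ : ∃ m, lam m ≠ 0 ∧ (m = i ∨ m = j) := by
    rcases not_and_or.1 hij with h | h
    · exact ⟨i, h, Or.inl rfl⟩
    · exact ⟨j, h, Or.inr rfl⟩
  have hw0 : jmul (c m) w = (0 : ℝ) • w := by
    rw [zero_smul, jmul_eq_zero_of_mem_peirceSum hm hw]
  refine hJ.traceForm_eq_zero_of_eigenvalue_ne hw0 (mem_peirce.1 hu m) (Ne.symm ?_)
  rcases hmij with rfl | rfl <;> split_ifs <;> simp_all

theorem IsJordanProduct.peirceSum_le_orbit (hJ : IsJordanProduct jmul)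
    (hidem : ∀ i, jmul (c i) (c i) = c i) (horth : ∀ i j, i ≠ j → jmul (c i) (c j) = 0)
    (lam : Fin r → ℝ) :
    peirceSum jmul c (fun i j => ¬(lam i = 0 ∧ lam j = 0)) ≤
      (LieSubalgebra.lieSpan ℝ (Module.End ℝ J) {S | ∃ u : J, S = jmul u}).orbit
        (∑ k, lam k • c k) := by
  set 𝔤 := LieSubalgebra.lieSpan ℝ (Module.End ℝ J) {S | ∃ u : J, S = jmul u}
  set x := ∑ k, lam k • c k
  have hL : ∀ u, jmul u ∈ 𝔤 := fun u => LieSubalgebra.subset_lieSpan ⟨u, rfl⟩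
  refine iSup₂_le fun i j => iSup₂_le fun _ hij b hb => ?_
  have hbx : jmul b x = ((lam i + lam j) / 2) • b := by
    rw [hJ.comm, jmul_sum_smul_of_mem_peirce lam hb]
  by_cases hs : lam i + lam j = 0
  · -- then `L_b x = 0`, and the bracket with `L_{c i}` recovers `b` instead
    have hi : lam i ≠ 0 := fun h => hij ⟨h, by linarith⟩
    have hne : i ≠ j := by
      rintro rfl
      exact hi (by linarith)
    have hcx : jmul (c i) x = lam i • c i := by
      rw [map_sum, Finset.sum_eq_single i]
      · rw [map_smul, hidem]
      · intro k _ hk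
        rw [map_smul, horth i k (Ne.symm hk), smul_zero]
      · simp
    have hbc : jmul b (c i) = (1 / 2 : ℝ) • b := by
      rw [hJ.comm, mem_peirce.1 hb i, if_pos rfl, if_neg hne]
      norm_num
    refine ⟨(-2 / lam i) • ⁅jmul (c i), jmul b⁆, 𝔤.smul_mem _ (𝔤.lie_mem (hL _) (hL _)), ?_⟩
    simp only [LinearMap.applyₗ_apply_apply, Ring.lie_def, LinearMap.sub_apply,
      Module.End.mul_apply, hbx, hs, zero_div, zero_smul, map_zero, zero_sub, hcx, map_smul, hbc,
      smul_smul]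
    match_scalars
    field_simp
  · refine ⟨(2 / (lam i + lam j)) • jmul b, 𝔤.smul_mem _ (hL b), ?_⟩
    simp only [LinearMap.applyₗ_apply_apply, LinearMap.smul_apply, hbx, smul_smul]
    match_scalars
    field_simp

end Peirce

/-- for `x = Σ λ_i c_i`, the orbit `g(J)·x` of `x` under the structure
Lie algebra (the smallest Lie subalgebra of `End(J)` containing all `L_u`) equals the
sum of the Peirce spaces `J_{ij}` with `(λ_i, λ_j) ≠ (0,0)`. -/
theorem stmt10 (J : Type*) [AddCommGroup J] [Module ℝ J] [FiniteDimensional ℝ J]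
    (jmul : J →ₗ[ℝ] J →ₗ[ℝ] J)
    (hcomm : ∀ x y : J, jmul x y = jmul y x)
    (hjordan : ∀ x y : J, jmul (jmul x y) (jmul x x) = jmul x (jmul y (jmul x x)))
    (one : J) (hone : ∀ x : J, jmul one x = x)
    (hpos : ∀ x : J, x ≠ 0 → 0 < tauF jmul x x)
    (r : ℕ) (c : Fin r → J) (hframe : IsJordanFrame jmul one c)
    (lam : Fin r → ℝ) :
    {y : J | ∃ T ∈ LieSubalgebra.lieSpan ℝ (Module.End ℝ J)
        {S : Module.End ℝ J | ∃ u : J, S = jmul u}, y = T (∑ i, lam i • c i)} =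
      ((⨆ (i : Fin r) (j : Fin r) (_ : i ≤ j) (_ : ¬(lam i = 0 ∧ lam j = 0)),
        Peirce jmul c i j : Submodule ℝ J) : Set J) := by
  obtain ⟨hprim, horth, hsum⟩ := hframe
  have hJ : IsJordanProduct jmul := ⟨hcomm, hjordan⟩
  have hidem : ∀ i, jmul (c i) (c i) = c i := fun i => (hprim i).1
  have hτ : ∀ v, traceForm jmul v v = 0 → v = 0 := fun v hv => by
    by_contra h
    exact (hpos v h).ne' hv
  have hsplit := peirceSum_not_sup_peirceSum (hJ.iSup_peirce_eq_top hone hidem horth hsum)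
    (p := fun i j => lam i = 0 ∧ lam j = 0) fun _ _ => And.symm
  rw [← LieSubalgebra.coe_orbit]
  refine congrArg _ (le_antisymm ?_ (hJ.peirceSum_le_orbit hidem horth lam))
  calc _ ≤ (traceForm jmul).orthogonal (peirceSum jmul c fun i j => lam i = 0 ∧ lam j = 0) := by
        rintro _ ⟨T, hT, rfl⟩
        exact hJ.apply_sum_mem_orthogonal hidem lam
          (fun _ hm _ hw => jmul_eq_zero_of_mem_peirceSum hm hw)
          (lieSpan_jmul_le_jmulAddLieSubalgebra _ _ _ hT)
    _ ≤ _ := (traceForm jmul).orthogonal_le_of_sup_eq_top hτ hsplit (hJ.peirceSum_le_orthogonal lam)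
end
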